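/- Let f : 𝕋 → ℂ be a 2π-periodic function of class C^{ν,α} (i.e., ν times continuously differentiable with ν-th derivative Hölder of order α, 0 ≤ α ≤ 1, ν + α > 0). Then for every n = 1, 2, ..., the sum of |f̂(k)|² over integers k with 2^{n-1} ≤ |k| < 2^n is at most c ‖f‖²_{C^{ν,α}} 2^{-2n(ν+α)}, where c > 0 depends only on ν and α, ‖f‖_{C^{ν,α}} is the sum of the sup norms of f and its derivatives up to order ν plus the α-Hölder seminorm of the ν-th derivative, and f̂(k) = (1/2π)∫_𝕋 f(t)e^{-ikt}dt. -/

import Mathlib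

/-!
Bernstein's argument. Put `h = π / 2^n` and `g(t) = f^(ν)(t + h) - f^(ν)(t)`. The Hölder
condition gives `|g| ≤ M h^α`, hence `∑ |ĝ(k)|² ≤ M² h^(2α)` by Bessel's inequality. On the other
hand `ĝ(k) = (e^(ikh) - 1) (ik)^ν f̂(k)`, and on the block `2^(n-1) ≤ |k| < 2^n` the angle `kh`
lies in `[π/2, π]`, where `|e^(ikh) - 1|² ≥ 2`; so `|f̂(k)|² ≤ |ĝ(k)|² / (2 · 4^(ν(n-1)))` there.
-/

open MeasureTheory Real

noncomputable section

/-- The `k`-th Fourier coefficient of a `2π`-periodic function `f : ℝ → ℂ`: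
`f̂(k) = (1/2π) ∫_0^{2π} f(t) e^{-ikt} dt`. -/
def fourierCoef1 (f : ℝ → ℂ) (k : ℤ) : ℂ :=
  (1 / (2 * π) : ℝ) * ∫ t in (0 : ℝ)..(2 * π), f t * Complex.exp (-Complex.I * k * t)

open AddCircle intervalIntegral
open scoped Interval

section Periodic

variable {𝕜 F : Type*} [NontriviallyNormedField 𝕜] [NormedAddCommGroup F] [NormedSpace 𝕜 F]
  {f : 𝕜 → F} {T : 𝕜}

theorem Function.Periodic.deriv (hf : Function.Periodic f T) :
    Function.Periodic (deriv f) T := fun x => by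
  rw [← deriv_comp_add_const, show (fun y => f (y + T)) = f from funext hf]

theorem Function.Periodic.iteratedDeriv (hf : Function.Periodic f T) (m : ℕ) :
    Function.Periodic (iteratedDeriv m f) T := by
  induction m with
  | zero => simpa using hf
  | succ m ih => simpa only [iteratedDeriv_succ] using ih.deriv

end Periodic

theorem fourierCoeffOn_sub {a b : ℝ} (hab : a < b) {f g : ℝ → ℂ}
    (hf : IntervalIntegrable f volume a b) (hg : IntervalIntegrable g volume a b) (n : ℤ) :
    fourierCoeffOn hab (fun x => f x - g x) n
      = fourierCoeffOn hab f n - fourierCoeffOn hab g n := by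
  have hfourier : ContinuousOn (fun x : ℝ => fourier (-n) (x : AddCircle (b - a))) [[a, b]] :=
    ((map_continuous (fourier (-n))).comp (AddCircle.continuous_mk' _)).continuousOn
  simp_rw [fourierCoeffOn_eq_integral, smul_eq_mul, mul_sub,
    integral_sub (hf.continuousOn_mul hfourier) (hg.continuousOn_mul hfourier), smul_sub]

theorem fourierCoeffOn_of_hasDerivAt_of_eq {a b : ℝ} (hab : a < b) {f f' : ℝ → ℂ} {n : ℤ}
    (hn : n ≠ 0) (hfab : f a = f b) (hf : ∀ x ∈ [[a, b]], HasDerivAt f (f' x) x)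
    (hf' : IntervalIntegrable f' volume a b) :
    fourierCoeffOn hab f' n = 2 * π * Complex.I * n / (b - a) * fourierCoeffOn hab f n := by
  have hba : ((b - a : ℝ) : ℂ) ≠ 0 := Complex.ofReal_ne_zero.mpr (sub_pos.mpr hab).ne'
  have h2πn : (2 * π * Complex.I * n : ℂ) ≠ 0 := by
    simp [hn, pi_ne_zero, Complex.I_ne_zero]
  rw [fourierCoeffOn_of_hasDerivAt hab hn hf hf', hfab, sub_self, mul_zero, zero_sub]
  push_cast at hba ⊢
  field_simp

theorem fourierCoeffOn_iteratedDeriv {a b : ℝ} (hab : a < b) {f : ℝ → ℂ} {ν : ℕ}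
    (hf : ContDiff ℝ ν f) (hp : Function.Periodic f (b - a)) {n : ℤ} (hn : n ≠ 0) {m : ℕ}
    (hm : m ≤ ν) :
    fourierCoeffOn hab (iteratedDeriv m f) n
      = (2 * π * Complex.I * n / (b - a)) ^ m * fourierCoeffOn hab f n := by
  induction m with
  | zero => simp
  | succ m ih =>
    have hdiff := hf.differentiable_iteratedDeriv m (by exact_mod_cast hm)
    have hcont := hf.continuous_iteratedDeriv (m + 1) (by exact_mod_cast hm)
    rw [iteratedDeriv_succ] at hcont ⊢
    rw [fourierCoeffOn_of_hasDerivAt_of_eq hab hn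
      (by simpa using ((hp.iteratedDeriv m) a).symm)
      (fun x _ => (hdiff x).hasDerivAt) (hcont.intervalIntegrable _ _), ih (by omega), pow_succ]
    ring

theorem fourierCoeffOn_comp_add_right {a b : ℝ} (hab : a < b) {g : ℝ → ℂ}
    (hg : Function.Periodic g (b - a)) (c : ℝ) (n : ℤ) :
    fourierCoeffOn hab (fun x => g (x + c)) n
      = fourier n (c : AddCircle (b - a)) * fourierCoeffOn hab g n := by
  set G : ℝ → ℂ := fun y => fourier (-n) (y : AddCircle (b - a)) * g y
  have hG : Function.Periodic G (b - a) := fun y => by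
    simp only [G, AddCircle.coe_add_period, hg y]
  have hshift : ∀ x : ℝ, fourier (-n) (x : AddCircle (b - a)) * g (x + c)
      = fourier n (c : AddCircle (b - a)) * G (x + c) := fun x => by
    simp only [G, fourier_coe_apply]
    rw [← mul_assoc, ← Complex.exp_add]
    congr 2
    push_cast
    ring
  simp_rw [fourierCoeffOn_eq_integral, smul_eq_mul, hshift, intervalIntegral.integral_const_mul,
    integral_comp_add_right G c]
  rw [show b + c = a + c + (b - a) by ring, hG.intervalIntegral_add_eq (a + c) a, add_sub_cancel,
    mul_smul_comm]

theorem fourierCoeffOn_iteratedDeriv_comp_add_sub {a b : ℝ} (hab : a < b) {f : ℝ → ℂ} {ν : ℕ}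
    (hf : ContDiff ℝ ν f) (hp : Function.Periodic f (b - a)) (h : ℝ) {n : ℤ} (hn : n ≠ 0) :
    fourierCoeffOn hab (fun t => iteratedDeriv ν f (t + h) - iteratedDeriv ν f t) n
      = (fourier n (h : AddCircle (b - a)) - 1) * (2 * π * Complex.I * n / (b - a)) ^ ν
        * fourierCoeffOn hab f n := by
  have hφ := hf.continuous_iteratedDeriv ν le_rfl
  rw [fourierCoeffOn_sub hab (f := fun t => iteratedDeriv ν f (t + h))
    ((hφ.comp (continuous_add_const h)).intervalIntegrable _ _) (hφ.intervalIntegrable _ _),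
    fourierCoeffOn_comp_add_right hab (hp.iteratedDeriv ν),
    fourierCoeffOn_iteratedDeriv hab hf hp hn le_rfl]
  ring

theorem sum_sq_fourierCoeffOn_le_sq_of_norm_le {a b : ℝ} (hab : a < b) {g : ℝ → ℂ}
    (hg : Continuous g) {C : ℝ} (hC : ∀ x, ‖g x‖ ≤ C) (S : Finset ℤ) :
    ∑ k ∈ S, ‖fourierCoeffOn hab g k‖ ^ 2 ≤ C ^ 2 := by
  have hL2 : MemLp g 2 (volume.restrict (Set.Ioc a b)) :=
    MemLp.of_bound hg.aestronglyMeasurable C (ae_of_all _ hC)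
  have hint : ∫ x in a..b, ‖g x‖ ^ 2 ≤ ∫ _ in a..b, C ^ 2 :=
    integral_mono_on hab.le ((hg.norm.pow 2).intervalIntegrable _ _) intervalIntegrable_const
      fun x _ => pow_le_pow_left₀ (norm_nonneg _) (hC x) 2
  refine (sum_le_hasSum S (fun _ _ => by positivity) (hasSum_sq_fourierCoeffOn hab hL2)).trans ?_
  rw [intervalIntegral.integral_const, smul_eq_mul] at hint
  rw [smul_eq_mul, inv_mul_le_iff₀ (sub_pos.mpr hab)]
  exact hint

theorem two_le_norm_exp_mul_I_sub_one_sq {θ : ℝ} (h1 : π / 2 ≤ |θ|) (h2 : |θ| ≤ π + π / 2) :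
    2 ≤ ‖Complex.exp (θ * Complex.I) - 1‖ ^ 2 := by
  have hcos : cos θ ≤ 0 := by
    rw [← cos_abs]
    exact cos_nonpos_of_pi_div_two_le_of_le h1 h2
  rw [mul_comm, Complex.norm_exp_I_mul_ofReal_sub_one, Real.norm_eq_abs, sq_abs, mul_pow,
    sin_sq, cos_sq, show 2 * (θ / 2) = θ by ring]
  linarith

theorem fourierCoef1_eq_fourierCoeffOn (f : ℝ → ℂ) (k : ℤ) :
    fourierCoef1 f k = fourierCoeffOn two_pi_pos f k := by
  rw [fourierCoef1, fourierCoeffOn_eq_integral, sub_zero, Complex.real_smul]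
  congr 1
  refine integral_congr fun x _ => ?_
  rw [smul_eq_mul, mul_comm, fourier_coe_apply]
  congr 2
  have : (π : ℂ) ≠ 0 := Complex.ofReal_ne_zero.mpr pi_ne_zero
  push_cast
  field_simp

theorem two_mul_abs_pow_mul_norm_sq_fourierCoef1_le {f : ℝ → ℂ} {ν : ℕ} (hf : ContDiff ℝ ν f)
    (hp : Function.Periodic f (2 * π)) {h : ℝ} {k : ℤ} (hk1 : π / 2 ≤ |k * h|)
    (hk2 : |k * h| ≤ π + π / 2) :
    2 * |(k : ℝ)| ^ (2 * ν) * ‖fourierCoef1 f k‖ ^ 2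
      ≤ ‖fourierCoeffOn two_pi_pos
          (fun t => iteratedDeriv ν f (t + h) - iteratedDeriv ν f t) k‖ ^ 2 := by
  have hk : k ≠ 0 := by
    rintro rfl
    simp only [Int.cast_zero, zero_mul, abs_zero] at hk1
    linarith [pi_pos]
  have hπ : (π : ℂ) ≠ 0 := Complex.ofReal_ne_zero.mpr pi_ne_zero
  have hfourier :
      fourier k (h : AddCircle (2 * π - 0)) = Complex.exp ((k * h : ℝ) * Complex.I) := by
    rw [fourier_coe_apply]
    push_cast [sub_zero]
    congr 1
    field_simp
  have hmult : 2 * π * Complex.I * k / (((2 * π : ℝ) : ℂ) - ((0 : ℝ) : ℂ)) = Complex.I * k := by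
    push_cast [sub_zero]
    field_simp
  rw [fourierCoeffOn_iteratedDeriv_comp_add_sub two_pi_pos hf (by simpa using hp) h hk,
    ← fourierCoef1_eq_fourierCoeffOn, hfourier, hmult, norm_mul, norm_mul, norm_pow, norm_mul,
    Complex.norm_I, one_mul, Complex.norm_intCast, mul_pow, mul_pow, ← pow_mul, mul_comm ν,
    mul_assoc, mul_assoc]
  exact mul_le_mul_of_nonneg_right (two_le_norm_exp_mul_I_sub_one_sq hk1 hk2) (by positivity)

theorem sq_mul_div_rpow_div_eq {M p α A : ℝ} {ν : ℕ} (hp : 0 ≤ p) (hA : 0 < A) :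
    (M * (p / A) ^ α) ^ 2 / (2 * (A / 2) ^ (2 * ν))
      = p ^ (2 * α) * 4 ^ ν / 2 * M ^ 2 * A ^ (-(2 * ((ν : ℝ) + α))) := by
  have h4 : (4 : ℝ) ^ ν = 2 ^ (2 * ν) := by rw [pow_mul]; norm_num
  have hexp : 2 * ((ν : ℝ) + α) = ((2 * ν : ℕ) : ℝ) + α * 2 := by push_cast; ring
  rw [div_rpow hp hA.le, rpow_neg hA.le, mul_comm 2 α, rpow_mul hp, hexp, rpow_add hA,
    rpow_mul hA.le, rpow_natCast, rpow_two, rpow_two, h4, div_pow]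
  field_simp

theorem sum_sq_fourierCoef1_le_of_holder {f : ℝ → ℂ} {ν : ℕ} {α M A : ℝ}
    (hp : Function.Periodic f (2 * π)) (hf : ContDiff ℝ ν f)
    (hHol : ∀ s t : ℝ, ‖iteratedDeriv ν f s - iteratedDeriv ν f t‖ ≤ M * |s - t| ^ α)
    (hA : 0 < A) {S : Finset ℤ} (hS : ∀ k ∈ S, A / 2 ≤ |(k : ℝ)| ∧ |(k : ℝ)| ≤ A) :
    ∑ k ∈ S, ‖fourierCoef1 f k‖ ^ 2 ≤ π ^ (2 * α) * 4 ^ ν / 2 * M ^ 2 * A ^ (-(2 * (ν + α))) := by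
  have hh : 0 < π / A := by positivity
  set g : ℝ → ℂ := fun t => iteratedDeriv ν f (t + π / A) - iteratedDeriv ν f t
  have hg : Continuous g := by
    have := hf.continuous_iteratedDeriv ν le_rfl
    fun_prop
  have hg_le : ∀ t, ‖g t‖ ≤ M * (π / A) ^ α := fun t => by
    simpa [abs_of_pos hh] using hHol (t + π / A) t
  have hD : 0 < 2 * (A / 2) ^ (2 * ν) := by positivity
  have hblock : ∀ k ∈ S,
      ‖fourierCoef1 f k‖ ^ 2 ≤ ‖fourierCoeffOn two_pi_pos g k‖ ^ 2 / (2 * (A / 2) ^ (2 * ν)) := by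
    intro k hk
    obtain ⟨hK1, hK2⟩ := hS k hk
    rw [le_div_iff₀ hD, mul_comm]
    refine le_trans ?_ (two_mul_abs_pow_mul_norm_sq_fourierCoef1_le hf hp ?_ ?_)
    · gcongr
    · rw [abs_mul, abs_of_pos hh]
      calc π / 2 = A / 2 * (π / A) := by field_simp
        _ ≤ |(k : ℝ)| * (π / A) := by gcongr
    · rw [abs_mul, abs_of_pos hh]
      calc |(k : ℝ)| * (π / A) ≤ A * (π / A) := by gcongr
        _ = π := by field_simp
        _ ≤ π + π / 2 := by linarith [pi_pos]
  calc ∑ k ∈ S, ‖fourierCoef1 f k‖ ^ 2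
      ≤ ∑ k ∈ S, ‖fourierCoeffOn two_pi_pos g k‖ ^ 2 / (2 * (A / 2) ^ (2 * ν)) :=
        Finset.sum_le_sum hblock
    _ ≤ (M * (π / A) ^ α) ^ 2 / (2 * (A / 2) ^ (2 * ν)) := by
        rw [← Finset.sum_div]
        gcongr
        exact sum_sq_fourierCoeffOn_le_sq_of_norm_le two_pi_pos hg hg_le S
    _ = π ^ (2 * α) * 4 ^ ν / 2 * M ^ 2 * A ^ (-(2 * ((ν : ℝ) + α))) :=
        sq_mul_div_rpow_div_eq pi_pos.le hA

theorem stmt1_general (ν : ℕ) (α : ℝ) :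
    ∃ c : ℝ, 0 < c ∧
      ∀ (f : ℝ → ℂ) (M : ℝ),
        Function.Periodic f (2 * π) →
        ContDiff ℝ ν f →
        (∀ i ≤ ν, ∀ t : ℝ, ‖iteratedDeriv i f t‖ ≤ M) →
        (∀ s t : ℝ, ‖iteratedDeriv ν f s - iteratedDeriv ν f t‖ ≤ M * |s - t| ^ α) →
        ∀ n : ℕ, 1 ≤ n →
          ∑ k ∈ (Finset.Icc (-(2 ^ n : ℤ)) (2 ^ n)).filter
              (fun k => 2 ^ (n - 1) ≤ |k| ∧ |k| < 2 ^ n),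
            ‖fourierCoef1 f k‖ ^ 2
            ≤ c * M ^ 2 * ((2 : ℝ) ^ n) ^ (-(2 * ((ν : ℝ) + α))) := by
  refine ⟨π ^ (2 * α) * 4 ^ ν / 2, by positivity, ?_⟩
  intro f M hp hf _ hHol n hn
  refine sum_sq_fourierCoef1_le_of_holder hp hf hHol (by positivity) fun k hk => ?_
  obtain ⟨-, hk1, hk2⟩ := Finset.mem_filter.mp hk
  constructor
  · rw [← pow_sub_one_mul (by omega : n ≠ 0) (2 : ℝ), mul_div_cancel_right₀ _ two_ne_zero]
    exact_mod_cast hk1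
  · exact_mod_cast hk2.le

/-- Let `f : 𝕋 → ℂ` be `2π`-periodic of class `C^{ν,α}` (`ν` times continuously
differentiable with ν-th derivative α-Hölder, `0 ≤ α ≤ 1`, `ν + α > 0`), with `M`
a bound for the `C^{ν,α}` norm (sup norms of derivatives up to order `ν` and the
α-Hölder seminorm of the ν-th derivative). Then for every `n ≥ 1`,
`∑_{2^{n-1} ≤ |k| < 2^n} |f̂(k)|² ≤ c M² 2^{-2n(ν+α)}`, with `c = c(ν, α) > 0`. -/
theorem stmt1 (ν : ℕ) (α : ℝ) (hα0 : 0 ≤ α) (hα1 : α ≤ 1)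
    (hpos : 0 < (ν : ℝ) + α) :
    ∃ c : ℝ, 0 < c ∧
      ∀ (f : ℝ → ℂ) (M : ℝ),
        Function.Periodic f (2 * π) →
        ContDiff ℝ ν f →
        (∀ i ≤ ν, ∀ t : ℝ, ‖iteratedDeriv i f t‖ ≤ M) →
        (∀ s t : ℝ, ‖iteratedDeriv ν f s - iteratedDeriv ν f t‖ ≤ M * |s - t| ^ α) →
        ∀ n : ℕ, 1 ≤ n →
          ∑ k ∈ (Finset.Icc (-(2 ^ n : ℤ)) (2 ^ n)).filter
              (fun k => 2 ^ (n - 1) ≤ |k| ∧ |k| < 2 ^ n),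
            ‖fourierCoef1 f k‖ ^ 2
            ≤ c * M ^ 2 * ((2 : ℝ) ^ n) ^ (-(2 * ((ν : ℝ) + α))) :=
  stmt1_general ν α
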